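/- Let A be a real positive-definite matrix indexed by α ⊕ β with block decomposition A = fromBlocks A₁₁ A₁₂ A₂₁ A₂₂. Let B : Matrix α (α ⊕ β) ℝ be the α-row block of A⁻¹ (i.e. B has entries (A⁻¹)_{Sum.inl i, j}), and let K : Matrix (α ⊕ β) α ℝ be the matrix of α-columns of A (i.e. K has entries A_{j, Sum.inl i}). Then for every i : α, the i-th diagonal entry of A₁₁ − A₁₂ * A₂₂⁻¹ * A₂₁ equals the i-th row sum of the Hadamard product (((A⁻¹)₁₁)⁻¹ * B) ⊙ Kᵀ, that is, (A₁₁ − A₁₂A₂₂⁻¹A₂₁)_{i,i} = ∑_{j : α ⊕ β} (((A⁻¹)₁₁)⁻¹ * B)_{i,j} · K_{j,i}. (Theorem 3.1 of the paper: the squared power function vector (P^V)² = diag(k_p(V) − k^p(V)ᵀ(A^{p,p})⁻¹k^p(V)) can be computed as sum(((A⁻¹_{p,p})⁻¹ A⁻¹_{p,:}) ⊙ k(V)ᵀ).) -/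

import Mathlib

/-!
The Schur complement formula for the inverse of a block matrix identifies `(A⁻¹)₁₁` with
`(A₁₁ - A₁₂ A₂₂⁻¹ A₂₁)⁻¹`. On the other side, the row sums of the Hadamard product are the
diagonal entries of the ordinary product `((A⁻¹)₁₁)⁻¹ B K`, and `B K` is the `α × α` block of
`A⁻¹ A = 1`, i.e. the identity.
-/

open Matrix

namespace Matrix

theorem PosDef.toBlocks₂₂ {m n R : Type*} [Ring R] [PartialOrder R] [StarRing R]
    {M : Matrix (m ⊕ n) (m ⊕ n) R} (hM : M.PosDef) : M.toBlocks₂₂.PosDef :=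
  hM.submatrix Sum.inr_injective

variable {m n R : Type*} [Fintype m] [Fintype n] [DecidableEq m] [DecidableEq n] [CommRing R]

theorem toRows₁_inv_mul_toCols₁ {M : Matrix (m ⊕ n) (m ⊕ n) R} (hM : IsUnit M.det) :
    M⁻¹.toRows₁ * M.toCols₁ = 1 := by
  have h : M⁻¹.toRows₁ * M.toCols₁ = (M⁻¹ * M).toBlocks₁₁ := rfl
  rw [h, nonsing_inv_mul M hM, ← fromBlocks_one, toBlocks_fromBlocks₁₁]

variable {A : Matrix m m R} {B : Matrix m n R} {C : Matrix n m R} {D : Matrix n n R}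

theorem isUnit_det_sub_mul_inv_mul_of_fromBlocks (hD : IsUnit D.det)
    (hM : IsUnit (fromBlocks A B C D).det) : IsUnit (A - B * D⁻¹ * C).det := by
  let := D.invertibleOfIsUnitDet hD
  rw [det_fromBlocks₂₂, invOf_eq_nonsing_inv, IsUnit.mul_iff] at hM
  exact hM.2

theorem toBlocks₁₁_inv_fromBlocks (hD : IsUnit D.det) (hM : IsUnit (fromBlocks A B C D).det) :
    (fromBlocks A B C D)⁻¹.toBlocks₁₁ = (A - B * D⁻¹ * C)⁻¹ := by
  let := D.invertibleOfIsUnitDet hD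
  let := (fromBlocks A B C D).invertibleOfIsUnitDet hM
  let := invertibleOfFromBlocks₂₂Invertible A B C D
  rw [← invOf_eq_nonsing_inv, invOf_fromBlocks₂₂_eq, toBlocks_fromBlocks₁₁, invOf_eq_nonsing_inv,
    invOf_eq_nonsing_inv]

theorem inv_toBlocks₁₁_inv_fromBlocks (hD : IsUnit D.det) (hM : IsUnit (fromBlocks A B C D).det) :
    (fromBlocks A B C D)⁻¹.toBlocks₁₁⁻¹ = A - B * D⁻¹ * C := by
  rw [toBlocks₁₁_inv_fromBlocks hD hM,
    nonsing_inv_nonsing_inv _ (isUnit_det_sub_mul_inv_mul_of_fromBlocks hD hM)]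

end Matrix

/-- Theorem 3.1 of the paper: the squared power function values, i.e. the diagonal
entries of the Schur complement `A₁₁ - A₁₂ A₂₂⁻¹ A₂₁`, can be computed as the row sums
of the Hadamard product `(((A⁻¹)₁₁)⁻¹ * (A⁻¹)_{p,:}) ⊙ k(V)ᵀ`. -/
theorem erba_power_function_formula {α β : Type*} [Fintype α] [Fintype β]
    [DecidableEq α] [DecidableEq β]
    (A : Matrix (α ⊕ β) (α ⊕ β) ℝ)
    (A₁₁ : Matrix α α ℝ) (A₁₂ : Matrix α β ℝ) (A₂₁ : Matrix β α ℝ) (A₂₂ : Matrix β β ℝ)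
    (hA : A.PosDef) (hblocks : A = Matrix.fromBlocks A₁₁ A₁₂ A₂₁ A₂₂)
    (B : Matrix α (α ⊕ β) ℝ) (hB : ∀ i j, B i j = A⁻¹ (Sum.inl i) j)
    (K : Matrix (α ⊕ β) α ℝ) (hK : ∀ j i, K j i = A j (Sum.inl i)) :
    ∀ i : α, (A₁₁ - A₁₂ * A₂₂⁻¹ * A₂₁) i i =
      ∑ j : α ⊕ β, (((A⁻¹).toBlocks₁₁)⁻¹ * B) i j * K j i := by
  intro i
  obtain rfl : B = A⁻¹.toRows₁ := ext hB
  obtain rfl : K = A.toCols₁ := ext hK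
  have hAdet : IsUnit A.det := hA.det_pos.ne'.isUnit
  have hA₂₂det : IsUnit A₂₂.det := by
    simpa [hblocks] using hA.toBlocks₂₂.det_pos.ne'.isUnit
  have hS : A⁻¹.toBlocks₁₁⁻¹ = A₁₁ - A₁₂ * A₂₂⁻¹ * A₂₁ := by
    subst hblocks
    exact inv_toBlocks₁₁_inv_fromBlocks hA₂₂det hAdet
  calc (A₁₁ - A₁₂ * A₂₂⁻¹ * A₂₁) i i = (A⁻¹.toBlocks₁₁⁻¹ * (A⁻¹.toRows₁ * A.toCols₁)) i i := by
        rw [toRows₁_inv_mul_toCols₁ hAdet, Matrix.mul_one, hS]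
    _ = ∑ j, (A⁻¹.toBlocks₁₁⁻¹ * A⁻¹.toRows₁) i j * A.toCols₁ j i := by
        rw [← Matrix.mul_assoc, mul_apply]
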